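/- (Remark 3, necessity) Suppose there exists x̄ ∈ C with Ψ^H x̄ = 0 (i.e., N(Ψ^H) ∩ C ≠ ∅). If X_u ∩ Q = ∅ for every u ≥ 0 (i.e., U = +∞), then for every x⋄ ∈ X⋄ the set ∇L(x⋄) + N_C(x⋄) is disjoint from Re(R(Ψ)) = {Re(Ψ w) : w ∈ ℂ^{p'}}. -/

import Mathlib

open Matrix
open scoped RealInnerProductSpace ENNReal

noncomputable section

def cnorm1 {n : ℕ} (z : Fin n → ℂ) : ℝ := ∑ j, ‖z j‖

noncomputable def cnormInf {n : ℕ} (z : Fin n → ℂ) : ℝ := ⨆ j, ‖z j‖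

def psiH {p p' : ℕ} (Ψ : Matrix (Fin p) (Fin p') ℂ) (x : EuclideanSpace ℝ (Fin p)) :
    Fin p' → ℂ :=
  Matrix.mulVec Ψᴴ fun i => (x i : ℂ)

def rePsi {p p' : ℕ} (Ψ : Matrix (Fin p) (Fin p') ℂ) (w : Fin p' → ℂ) :
    EuclideanSpace ℝ (Fin p) :=
  WithLp.toLp 2 fun i => (Matrix.mulVec Ψ w i).re

def Gset {n : ℕ} (s : Fin n → ℂ) : Set (Fin n → ℂ) :=
  {w | ∀ j, ‖w j‖ ≤ 1 ∧ (s j ≠ 0 → w j = s j / (‖s j‖ : ℂ))}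

def normalCone {p : ℕ} (C : Set (EuclideanSpace ℝ (Fin p))) (x : EuclideanSpace ℝ (Fin p)) :
    Set (EuclideanSpace ℝ (Fin p)) :=
  {a | ∀ y ∈ C, ⟪a, y - x⟫ ≤ 0}

def XuSet {p p' : ℕ} (C : Set (EuclideanSpace ℝ (Fin p))) (L : EuclideanSpace ℝ (Fin p) → ℝ)
    (Ψ : Matrix (Fin p) (Fin p') ℂ) (u : ℝ) : Set (EuclideanSpace ℝ (Fin p)) :=
  {x ∈ C | ∀ χ ∈ C, L x + u * cnorm1 (psiH Ψ x) ≤ L χ + u * cnorm1 (psiH Ψ χ)}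

def QSet {p p' : ℕ} (C : Set (EuclideanSpace ℝ (Fin p))) (Ψ : Matrix (Fin p) (Fin p') ℂ) :
    Set (EuclideanSpace ℝ (Fin p)) :=
  {x ∈ C | ∀ χ ∈ C, cnorm1 (psiH Ψ x) ≤ cnorm1 (psiH Ψ χ)}

def XdSet {p p' : ℕ} (C : Set (EuclideanSpace ℝ (Fin p))) (L : EuclideanSpace ℝ (Fin p) → ℝ)
    (Ψ : Matrix (Fin p) (Fin p') ℂ) : Set (EuclideanSpace ℝ (Fin p)) :=
  {x ∈ QSet C Ψ | ∀ χ ∈ QSet C Ψ, L x ≤ L χ}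

def Ubound {p p' : ℕ} (C : Set (EuclideanSpace ℝ (Fin p))) (L : EuclideanSpace ℝ (Fin p) → ℝ)
    (Ψ : Matrix (Fin p) (Fin p') ℂ) : ℝ≥0∞ :=
  sInf (ENNReal.ofReal '' {u : ℝ | 0 ≤ u ∧ (XuSet C L Ψ u ∩ QSet C Ψ).Nonempty})

/-!
Since some `x̄ ∈ C` has `Ψᴴ x̄ = 0`, every `x⋄ ∈ Q` has `Ψᴴ x⋄ = 0`. If `∇L(x⋄) + a = Re(Ψ w)` with
`a ∈ N_C(x⋄)`, then for `χ ∈ C` the gradient inequality gives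
`L χ ≥ L x⋄ + ⟪Re(Ψ w), χ⟫ ≥ L x⋄ - ‖w‖_∞ ‖Ψᴴ χ‖₁` (Hölder), so `x⋄ ∈ X_u ∩ Q` for `u = ‖w‖_∞`.
-/

theorem ConvexOn.add_inner_sub_le_of_hasGradientAt {E : Type*} [NormedAddCommGroup E]
    [InnerProductSpace ℝ E] [CompleteSpace E] {s : Set E} {L : E → ℝ} {x y g : E}
    (hL : ConvexOn ℝ s L) (hx : x ∈ s) (hy : y ∈ s) (hg : HasGradientAt L g x) :
    L x + ⟪g, y - x⟫ ≤ L y := by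
  have hline : ConvexOn ℝ (AffineMap.lineMap (k := ℝ) x y ⁻¹' s)
      (L ∘ AffineMap.lineMap (k := ℝ) x y) :=
    hL.comp_affineMap _
  have hderiv : HasDerivAt (L ∘ AffineMap.lineMap (k := ℝ) x y) ⟪g, y - x⟫ 0 := by
    have hg0 : HasFDerivAt L (InnerProductSpace.toDual ℝ E g)
        (AffineMap.lineMap x y (0 : ℝ)) := by
      simpa using hg.hasFDerivAt
    simpa using hg0.comp_hasDerivAt (0 : ℝ) AffineMap.hasDerivAt_lineMap
  have hslope := hline.le_slope_of_hasDerivAt (by simpa using hx) (by simpa using hy)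
    zero_lt_one hderiv
  simp only [slope_def_field, Function.comp_apply, AffineMap.lineMap_apply_zero,
    AffineMap.lineMap_apply_one, sub_zero, div_one] at hslope
  linarith

section Norms

variable {n : ℕ}

lemma cnorm1_nonneg (z : Fin n → ℂ) : 0 ≤ cnorm1 z :=
  Finset.sum_nonneg fun j _ => norm_nonneg (z j)

@[simp]
lemma cnorm1_zero : cnorm1 (0 : Fin n → ℂ) = 0 := by
  simp [cnorm1]

@[simp]
lemma cnorm1_star (z : Fin n → ℂ) : cnorm1 (star z) = cnorm1 z := by
  simp [cnorm1]

lemma norm_le_cnormInf (w : Fin n → ℂ) (j : Fin n) : ‖w j‖ ≤ cnormInf w :=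
  le_ciSup (Set.finite_range fun j => ‖w j‖).bddAbove j

lemma cnormInf_nonneg (w : Fin n → ℂ) : 0 ≤ cnormInf w :=
  Real.iSup_nonneg fun j => norm_nonneg (w j)

lemma norm_dotProduct_le_cnorm1_mul_cnormInf (z w : Fin n → ℂ) :
    ‖z ⬝ᵥ w‖ ≤ cnorm1 z * cnormInf w := calc
  ‖z ⬝ᵥ w‖ ≤ ∑ j, ‖z j‖ * ‖w j‖ := by
    simpa only [dotProduct, norm_mul] using norm_sum_le Finset.univ fun j => z j * w j
  _ ≤ ∑ j, ‖z j‖ * cnormInf w :=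
    Finset.sum_le_sum fun j _ => mul_le_mul_of_nonneg_left (norm_le_cnormInf w j) (norm_nonneg _)
  _ = cnorm1 z * cnormInf w := by rw [cnorm1, Finset.sum_mul]

end Norms

section RePsi

variable {p p' : ℕ} (Ψ : Matrix (Fin p) (Fin p') ℂ)

lemma inner_rePsi (w : Fin p' → ℂ) (x : EuclideanSpace ℝ (Fin p)) :
    ⟪rePsi Ψ w, x⟫ = (star (psiH Ψ x) ⬝ᵥ w).re := by
  have hx : star (fun i => (x i : ℂ)) = fun i => (x i : ℂ) :=
    funext fun i => Complex.conj_ofReal _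
  rw [psiH, star_mulVec, conjTranspose_conjTranspose, hx, ← dotProduct_mulVec, dotProduct,
    Complex.re_sum, PiLp.inner_apply]
  simp [rePsi, mul_comm]

lemma abs_inner_rePsi_le (w : Fin p' → ℂ) (x : EuclideanSpace ℝ (Fin p)) :
    |⟪rePsi Ψ w, x⟫| ≤ cnormInf w * cnorm1 (psiH Ψ x) := by
  rw [inner_rePsi, mul_comm, ← cnorm1_star]
  exact (Complex.abs_re_le_norm _).trans (norm_dotProduct_le_cnorm1_mul_cnormInf _ _)

end RePsi

section Sparsity

variable {p p' : ℕ} {C : Set (EuclideanSpace ℝ (Fin p))} {Ψ : Matrix (Fin p) (Fin p') ℂ}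

lemma cnorm1_psiH_eq_zero_of_mem_QSet {x : EuclideanSpace ℝ (Fin p)} (hx : x ∈ QSet C Ψ)
    (hker : ∃ x ∈ C, psiH Ψ x = 0) : cnorm1 (psiH Ψ x) = 0 := by
  obtain ⟨x₀, hx₀C, hx₀⟩ := hker
  exact le_antisymm (by simpa [hx₀] using hx.2 x₀ hx₀C) (cnorm1_nonneg _)

theorem mem_XuSet_of_add_eq_rePsi {L : EuclideanSpace ℝ (Fin p) → ℝ} (hL : ConvexOn ℝ C L)
    {x g a : EuclideanSpace ℝ (Fin p)} {w : Fin p' → ℂ} (hx : x ∈ C)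
    (hg : HasGradientAt L g x) (hx0 : cnorm1 (psiH Ψ x) = 0) (ha : a ∈ normalCone C x) (heq : g + a = rePsi Ψ w) :
    x ∈ XuSet C L Ψ (cnormInf w) := by
  refine ⟨hx, fun χ hχ => ?_⟩
  have hsub := hL.add_inner_sub_le_of_hasGradientAt hx hχ hg
  have hsplit : ⟪g, χ - x⟫ + ⟪a, χ - x⟫ = ⟪rePsi Ψ w, χ⟫ - ⟪rePsi Ψ w, x⟫ := by
    rw [← inner_add_left, heq, inner_sub_right]
  have hx' := abs_le.mp (abs_inner_rePsi_le Ψ w x)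
  have hχ' := abs_le.mp (abs_inner_rePsi_le Ψ w χ)
  rw [hx0, mul_zero] at hx' ⊢
  linarith [ha χ hχ]

end Sparsity

theorem statement_8_general {p p' : ℕ}
    (C : Set (EuclideanSpace ℝ (Fin p)))
    (hCcv : Convex ℝ C)
    (L : EuclideanSpace ℝ (Fin p) → ℝ) (hLcv : ConvexOn ℝ Set.univ L)
    (gradL : EuclideanSpace ℝ (Fin p) → EuclideanSpace ℝ (Fin p))
    (hLd : ∀ x, HasGradientAt L (gradL x) x)
    (Ψ : Matrix (Fin p) (Fin p') ℂ)
    (hbar : ∃ x ∈ C, psiH Ψ x = 0)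
    (hUinf : ∀ u : ℝ, 0 ≤ u → XuSet C L Ψ u ∩ QSet C Ψ = ∅) :
    ∀ xd ∈ XdSet C L Ψ,
      ∀ a ∈ normalCone C xd, ∀ w : Fin p' → ℂ, gradL xd + a ≠ rePsi Ψ w := by
  intro xd hxd a ha w heq
  have hxd0 := cnorm1_psiH_eq_zero_of_mem_QSet hxd.1 hbar
  have hXu := mem_XuSet_of_add_eq_rePsi (hLcv.subset (Set.subset_univ C) hCcv) hxd.1.1 (hLd xd)
    hxd0 ha heq
  exact (Set.eq_empty_iff_forall_notMem.mp (hUinf _ (cnormInf_nonneg w))) xd ⟨hXu, hxd.1⟩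

theorem statement_8 {p p' : ℕ} (hp : 0 < p) (hp' : 0 < p')
    (C : Set (EuclideanSpace ℝ (Fin p))) (hCne : C.Nonempty) (hCcl : IsClosed C)
    (hCcv : Convex ℝ C)
    (L : EuclideanSpace ℝ (Fin p) → ℝ) (hLcv : ConvexOn ℝ Set.univ L)
    (gradL : EuclideanSpace ℝ (Fin p) → EuclideanSpace ℝ (Fin p))
    (hLd : ∀ x, HasGradientAt L (gradL x) x)
    (hLb : BddBelow (L '' C))
    (Ψ : Matrix (Fin p) (Fin p') ℂ) (hXd : (XdSet C L Ψ).Nonempty)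
    (hbar : ∃ x ∈ C, psiH Ψ x = 0)
    (hUinf : ∀ u : ℝ, 0 ≤ u → XuSet C L Ψ u ∩ QSet C Ψ = ∅) :
    ∀ xd ∈ XdSet C L Ψ,
      ∀ a ∈ normalCone C xd, ∀ w : Fin p' → ℂ, gradL xd + a ≠ rePsi Ψ w :=
  statement_8_general C hCcv L hLcv gradL hLd Ψ hbar hUinf
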